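/- Let G be a group. For every pair (g,h) ∈ G², the map τ_{g,h} : CO(G) → ℝ defined by τ_{g,h}(c) = τ_c(g,h) is continuous, where CO(G) carries the subspace topology from the product topology on {0,±1}^{G³}. -/

import Mathlib

/-!
For a lift `x ∈ G̃_c`, the integer `[xⁿ]_c` is a finite sum of values `f_c(a, b)`, each of
which depends on the single value `c(1, a, ab)`; so `c ↦ [xⁿ]_c` is locally constant on `CO(G)`.
Since `f_c` takes values in `{0, 1}`, the sequence `n ↦ [xⁿ]_c` is superadditive with defect at
most `1`, and Fekete's lemma gives `|r̃ot_c(x) - [xⁿ]_c / n| ≤ 1 / n` uniformly in `c`. Hence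
`r̃ot_c` of a lift, and with it `τ_c(g, h)`, is a uniform limit of continuous functions of `c`.
-/

namespace Paper

variable {G : Type*} [Group G]

/-- A left-invariant circular ordering of a group `G`, as a function `G³ → {0, ±1} ⊆ ℤ`. -/
def IsCircOrd (c : G → G → G → ℤ) : Prop :=
  (∀ g₁ g₂ g₃ : G, c g₁ g₂ g₃ = 0 ↔ (g₁ = g₂ ∨ g₁ = g₃ ∨ g₂ = g₃)) ∧
  (∀ g₁ g₂ g₃ : G, c g₁ g₂ g₃ = 0 ∨ c g₁ g₂ g₃ = 1 ∨ c g₁ g₂ g₃ = -1) ∧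
  (∀ g₁ g₂ g₃ g₄ : G, c g₂ g₃ g₄ - c g₁ g₃ g₄ + c g₁ g₂ g₄ - c g₁ g₂ g₃ = 0) ∧
  (∀ g g₁ g₂ g₃ : G, c (g*g₁) (g*g₂) (g*g₃) = c g₁ g₂ g₃)

/-- The space CO(G) of circular orderings, topologized as a subspace of `ℤ^{G³}`
(all relevant values lie in the discrete set `{0,±1}`, and `ℤ` carries the discrete
topology, so this is the subspace topology from the product topology on `{0,±1}^{G³}`). -/
abbrev CircOrd (G : Type*) [Group G] := {c : G → G → G → ℤ // IsCircOrd c}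

open Classical in
/-- The cocycle `f_c`: `f_c(g,h) = 0` if `g = 1` or `h = 1` or `c(1,g,gh) = 1`,
and `f_c(g,h) = 1` otherwise (i.e. when `gh = 1 ≠ g`, or `c(1,gh,g) = 1`). -/
noncomputable def fc (c : G → G → G → ℤ) (g h : G) : ℤ :=
  if g = 1 ∨ h = 1 ∨ c 1 g (g*h) = 1 then 0 else 1

/-- Multiplication in the central extension `G̃_c = G × ℤ`:
`(g,n)(h,m) = (gh, n+m+f_c(g,h))`. -/
noncomputable def liftMul (c : G → G → G → ℤ) (x y : G × ℤ) : G × ℤ :=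
  (x.1 * y.1, x.2 + y.2 + fc c x.1 y.1)

/-- Powers (with natural number exponents) in `G̃_c`. -/
noncomputable def liftPow (c : G → G → G → ℤ) (x : G × ℤ) : ℕ → G × ℤ
  | 0 => (1, 0)
  | n+1 => liftMul c (liftPow c x n) x

/-- `[h]_c`: the unique integer `k` with `z_c^k ≤_c h <_c z_c^{k+1}`, where `<_c` is the
left-ordering of `G̃_c` with positive cone `{(g,n) : n ≥ 0} ∖ {(1,0)}` and `z_c = (1,1)`.
Since `z_c^k = (1,k)` and `f_c(g,g⁻¹) = 1` for `g ≠ 1`, this is exactly the second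
coordinate of `h`. -/
def liftFloor (h : G × ℤ) : ℤ := h.2

/-- The translation number `r̃ot_c(h)` of `h ∈ G̃_c`: the limit of `[hⁿ]_c / n`
(`limUnder` picks out the limit when it exists). -/
noncomputable def rotTilde (c : G → G → G → ℤ) (h : G × ℤ) : ℝ :=
  Filter.limUnder Filter.atTop (fun n : ℕ => (liftFloor (liftPow c h n) : ℝ) / (n : ℝ))

/-- The rotation number `rot_c(g) ∈ ℝ/ℤ`, computed using the lift `(g,0) ∈ G̃_c`
(it is independent of the choice of lift). -/
noncomputable def rotc (c : G → G → G → ℤ) (g : G) : AddCircle (1:ℝ) :=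
  ((rotTilde c (g, 0) : ℝ) : AddCircle (1:ℝ))

/-- `τ_c(g,h) = r̃ot_c(g̃h̃) − r̃ot_c(g̃) − r̃ot_c(h̃)`, computed using the lifts `(g,0)`
and `(h,0)` (it is independent of the choice of lifts). -/
noncomputable def tauc (c : G → G → G → ℤ) (g h : G) : ℝ :=
  rotTilde c (liftMul c (g,0) (h,0)) - rotTilde c (g,0) - rotTilde c (h,0)

/-- A positive cone of a group `G`: `P · P ⊆ P` and `P ∪ P⁻¹ = G ∖ {1}`.
It determines a left-ordering by `g < h` iff `g⁻¹h ∈ P`. -/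
def IsPositiveCone (P : Set G) : Prop :=
  (∀ a ∈ P, ∀ b ∈ P, a * b ∈ P) ∧ (P ∪ P⁻¹ = {g : G | g ≠ 1})

/-- The left-ordering determined by a positive cone. -/
def coneLt (P : Set G) (a b : G) : Prop := a⁻¹ * b ∈ P

open Classical in
/-- The secret left-ordering `c_<` determined by a positive cone `P`:
`c_<(a,b,c) = sign σ` where `σ` is the permutation sorting `(a,b,c)` into increasing
order, i.e. `c_< = 1` on positively cyclically ordered triples, `-1` on negatively
cyclically ordered triples, and `0` when the entries are not all distinct. -/
noncomputable def circOfCone (P : Set G) : G → G → G → ℤ := fun a b c =>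
  if (coneLt P a b ∧ coneLt P b c) ∨ (coneLt P b c ∧ coneLt P c a) ∨
      (coneLt P c a ∧ coneLt P a b) then 1
  else if (coneLt P c b ∧ coneLt P b a) ∨ (coneLt P b a ∧ coneLt P a c) ∨
      (coneLt P a c ∧ coneLt P c b) then -1
  else 0

/-- A circular ordering is a *secret left-ordering* if it is `c_<` for some
left-ordering `<` of `G`. -/
def IsSecret (c : G → G → G → ℤ) : Prop := ∃ P : Set G, IsPositiveCone P ∧ c = circOfCone P

open Filter Topology

lemma fc_one_left (c : G → G → G → ℤ) (h : G) : fc c 1 h = 0 := by simp [fc]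

lemma fc_one_right (c : G → G → G → ℤ) (g : G) : fc c g 1 = 0 := by simp [fc]

lemma fc_eq_zero_or_one (c : G → G → G → ℤ) (g h : G) : fc c g h = 0 ∨ fc c g h = 1 := by
  unfold fc; split_ifs <;> simp

open Classical in
/-- This closed form turns the cocycle identity for `fc` into a linear consequence of
condition (2) on the quadruple `(1, g, gh, ghk)`. -/
lemma two_mul_fc {c : G → G → G → ℤ} (hc : IsCircOrd c) (g h : G) :
    2 * fc c g h = 1 - c 1 g (g * h) + (if g * h = 1 then 1 else 0)
      - (if g = 1 then 1 else 0) - (if h = 1 then 1 else 0) := by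
  obtain ⟨hzero, hrange, -, -⟩ := hc
  have hzero' : c 1 g (g * h) = 0 ↔ g = 1 ∨ g * h = 1 ∨ h = 1 := by
    rw [hzero, eq_comm (a := (1 : G)), eq_comm (a := (1 : G)), left_eq_mul]
  unfold fc
  rcases hrange 1 g (g * h) with h0 | h1 | hm1 <;> grind

lemma fc_cocycle {c : G → G → G → ℤ} (hc : IsCircOrd c) (g h k : G) :
    fc c g h + fc c (g * h) k = fc c h k + fc c g (h * k) := by
  obtain ⟨-, -, hcoc, hinv⟩ := id hc
  have hrel := hcoc 1 g (g * h) (g * h * k)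
  rw [show c g (g * h) (g * h * k) = c 1 h (h * k) by
    simpa [mul_assoc] using hinv g 1 h (h * k)] at hrel
  have := two_mul_fc hc g h
  have := two_mul_fc hc (g * h) k
  have := two_mul_fc hc h k
  have := two_mul_fc hc g (h * k)
  simp only [mul_assoc] at *
  omega

lemma liftMul_assoc {c : G → G → G → ℤ} (hc : IsCircOrd c) (x y z : G × ℤ) :
    liftMul c (liftMul c x y) z = liftMul c x (liftMul c y z) := by
  have := fc_cocycle hc x.1 y.1 z.1
  simp only [liftMul, Prod.mk.injEq, mul_assoc, true_and]
  omega

lemma liftMul_one (c : G → G → G → ℤ) (x : G × ℤ) : liftMul c x (1, 0) = x := by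
  simp [liftMul, fc_one_right]

lemma liftPow_succ (c : G → G → G → ℤ) (x : G × ℤ) (n : ℕ) :
    liftPow c x (n + 1) = liftMul c (liftPow c x n) x := rfl

lemma liftPow_add {c : G → G → G → ℤ} (hc : IsCircOrd c) (x : G × ℤ) (m n : ℕ) :
    liftPow c x (m + n) = liftMul c (liftPow c x m) (liftPow c x n) := by
  induction n with
  | zero => exact (liftMul_one c _).symm
  | succ n ih => rw [← add_assoc, liftPow_succ, ih, liftMul_assoc hc, liftPow_succ]

lemma liftPow_fst (c : G → G → G → ℤ) (x : G × ℤ) (n : ℕ) : (liftPow c x n).1 = x.1 ^ n := by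
  induction n with
  | zero => simp [liftPow]
  | succ n ih => simp [liftPow_succ, liftMul, ih, pow_succ]

lemma liftPow_snd_add_le {c : G → G → G → ℤ} (hc : IsCircOrd c) (x : G × ℤ) (m n : ℕ) :
    (liftPow c x m).2 + (liftPow c x n).2 ≤ (liftPow c x (m + n)).2 ∧
      (liftPow c x (m + n)).2 ≤ (liftPow c x m).2 + (liftPow c x n).2 + 1 := by
  rw [liftPow_add hc]
  have := fc_eq_zero_or_one c (liftPow c x m).1 (liftPow c x n).1
  simp only [liftMul]
  omega

lemma bddBelow_range_div_of_mul_le {u : ℕ → ℝ} (C : ℝ) (h : ∀ n : ℕ, n * C ≤ u n) :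
    BddBelow (Set.range fun n : ℕ => u n / n) := by
  refine ⟨min C 0, ?_⟩
  rintro _ ⟨n, rfl⟩
  rcases Nat.eq_zero_or_pos n with rfl | hn
  · simp
  · exact (min_le_left _ _).trans ((le_div_iff₀ (Nat.cast_pos.2 hn)).2 (by linarith [h n]))

lemma exists_tendsto_div_of_add_le_of_le_add_add_one {a : ℕ → ℝ}
    (hsup : ∀ m n, a m + a n ≤ a (m + n)) (hsub : ∀ m n, a (m + n) ≤ a m + a n + 1) :
    ∃ L, Tendsto (fun n : ℕ => a n / n) atTop (𝓝 L) ∧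
      ∀ n ≠ 0, a n / n ≤ L ∧ L ≤ (a n + 1) / n := by
  -- Both `a + 1` and `-a` are subadditive; their Fekete limits are `L` and `-L`.
  have hu : Subadditive fun n => a n + 1 := fun m n => by linarith [hsub m n]
  have hv : Subadditive fun n => -a n := fun m n => by linarith [hsup m n]
  have hu_bdd : BddBelow (Set.range fun n : ℕ => (a n + 1) / n) := by
    refine bddBelow_range_div_of_mul_le (a 1) fun n => ?_
    induction n with
    | zero => simp; linarith [hsub 0 0]
    | succ n ih => push_cast; linarith [hsup n 1]
  have hv_bdd : BddBelow (Set.range fun n : ℕ => -a n / n) := by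
    refine bddBelow_range_div_of_mul_le (-(a 1 + 1)) fun n => ?_
    induction n with
    | zero => simp; linarith [hsup 0 0]
    | succ n ih => push_cast; linarith [hsub n 1]
  have hdiff : Tendsto (fun n : ℕ => (a n + 1) / n - 1 / n) atTop (𝓝 hu.lim) := by
    simpa using (hu.tendsto_lim hu_bdd).sub tendsto_one_div_atTop_nhds_zero_nat
  have ha : Tendsto (fun n : ℕ => a n / n) atTop (𝓝 hu.lim) :=
    hdiff.congr fun n => by ring
  have hneg : hv.lim = -hu.lim :=
    tendsto_nhds_unique (hv.tendsto_lim hv_bdd) (by simpa [neg_div] using ha.neg)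
  refine ⟨hu.lim, ha, fun n hn => ⟨?_, hu.lim_le_div hu_bdd hn⟩⟩
  have := hv.lim_le_div hv_bdd hn
  rw [hneg, neg_div] at this
  linarith

lemma abs_rotTilde_sub_le {c : G → G → G → ℤ} (hc : IsCircOrd c) (x : G × ℤ) {n : ℕ}
    (hn : n ≠ 0) : |rotTilde c x - (liftPow c x n).2 / n| ≤ 1 / n := by
  obtain ⟨L, hL, hbounds⟩ := exists_tendsto_div_of_add_le_of_le_add_add_one
    (a := fun n => ((liftPow c x n).2 : ℝ))
    (fun m n => by exact_mod_cast (liftPow_snd_add_le hc x m n).1)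
    (fun m n => by exact_mod_cast (liftPow_snd_add_le hc x m n).2)
  have hrot : rotTilde c x = L := hL.limUnder_eq
  obtain ⟨hlow, hup⟩ := hbounds n hn
  rw [hrot, abs_le, add_div] at *
  constructor <;> linarith [show (0 : ℝ) ≤ 1 / n by positivity]

lemma continuous_of_forall_dist_le {X α : Type*} [TopologicalSpace X] [PseudoMetricSpace α]
    {f : X → α} {F : ℕ → X → α} (hF : ∀ n, Continuous (F n))
    (hdist : ∀ n x, dist (f x) (F n x) ≤ 1 / (n + 1)) : Continuous f := by
  refine (Metric.tendstoUniformly_iff.2 fun ε hε => ?_).continuous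
    (Frequently.of_forall hF : ∃ᶠ n in atTop, Continuous (F n))
  filter_upwards [tendsto_one_div_add_atTop_nhds_zero_nat.eventually (gt_mem_nhds hε)]
    with n hn x using (hdist n x).trans_lt hn

lemma continuous_fc (g h : G) : Continuous fun c : G → G → G → ℤ => fc c g h :=
  (continuous_of_discreteTopology (f := fun t : ℤ => fc (fun _ _ _ => t) g h)).comp
    (by fun_prop : Continuous fun c : G → G → G → ℤ => c 1 g (g * h))

lemma continuous_liftPow_snd (w : G) (n : ℕ) :
    Continuous fun p : (G → G → G → ℤ) × ℤ => (liftPow p.1 (w, p.2) n).2 := by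
  induction n with
  | zero => exact continuous_const
  | succ n ih =>
    simp only [liftPow_succ, liftMul, liftPow_fst]
    exact (ih.add continuous_snd).add ((continuous_fc _ _).comp continuous_fst)

lemma continuous_rotTilde (w : G) :
    Continuous fun p : CircOrd G × ℤ => rotTilde p.1.1 (w, p.2) := by
  refine continuous_of_forall_dist_le
    (F := fun n p => ((liftPow p.1.1 (w, p.2) (n + 1)).2 : ℝ) / (n + 1)) (fun n => ?_)
    fun n p => by
      simpa [Real.dist_eq] using abs_rotTilde_sub_le p.1.2 (w, p.2) n.succ_ne_zero
  exact (continuous_of_discreteTopology.comp ((continuous_liftPow_snd w (n + 1)).comp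
    (continuous_subtype_val.prodMap continuous_id))).div_const _

/-- Proposition 4.14: for each pair `(g,h) ∈ G²`, the map `τ_{g,h} : CO(G) → ℝ`,
`τ_{g,h}(c) = τ_c(g,h)`, is continuous. -/
theorem stmt7 (g h : G) :
    Continuous (fun c : CircOrd G => tauc c.1 g h) := by
  have hrot (w : G) {m : CircOrd G → ℤ} (hm : Continuous m) :
      Continuous fun c : CircOrd G => rotTilde c.1 (w, m c) := by
    have hpair : Continuous fun c : CircOrd G => (c, m c) := continuous_id.prodMk hm
    have hcomp := (continuous_rotTilde w).comp hpair
    exact hcomp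
  have hfc : Continuous fun c : CircOrd G => fc c.1 g h :=
    (continuous_fc g h).comp continuous_subtype_val
  simp only [tauc, liftMul, add_zero, zero_add]
  exact ((hrot (g * h) hfc).sub (hrot g continuous_const)).sub (hrot h continuous_const)

end Paper
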